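/- arXiv:math/0211253 — 2 statements merged into one kernel-verified Lean document; each statement's English description precedes it below -/
import Mathlib

section
/- Suppose |m| − k + 1 < 0, i.e., |m| < k − 1. Then the linear map f_{k,m} : V_{k−1} → V_k is injective and the dimension of its cokernel equals C(n+k−2, k). -/
/-!
Let `e : V_{j+1} → V_j`, `e_J ↦ ∑_{J_l > 0} e_{J - 1_l}`, be the contragredient action of the raising
generator. On basis vectors one checks the `sl₂` relations `e f = f e + (|m| - 2(j+1))` on `V_{j+1}`
and `e f = |m|` on `V_0`. Inductively along these relations, every eigenvalue of `e ∘ f` on `V_j` is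
a partial sum `∑_{t=s}^{j} (|m| - 2t) = (j - s + 1)(|m| - j - s)` with `s ≤ j`. If `|m| < j` none of
them vanishes, so `e ∘ f`, hence `f`, is injective on `V_j`, and the cokernel of `f_{k,m}` has
dimension `C(n+k-1, k) - C(n+k-2, k-1) = C(n+k-2, k)`.
-/

open Finsupp

/-- Multiindices `J : Fin n → ℕ` of total degree `j`. -/
abbrev MIdx (n j : ℕ) : Type := {J : Fin n → ℕ // ∑ i, J i = j}

/-- The complex vector space `V_j` with basis `{e_J : |J| = j}`. -/
abbrev V (n j : ℕ) : Type := MIdx n j →₀ ℂ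

/-- `J + 1ᵢ` : the multiindex `J` with its `i`-th entry increased by 1. -/
def incr {n : ℕ} (J : Fin n → ℕ) (i : Fin n) : Fin n → ℕ :=
  Function.update J i (J i + 1)

lemma sum_incr {n : ℕ} (J : Fin n → ℕ) (i : Fin n) :
    ∑ x, incr J i x = (∑ x, J x) + 1 := by
  unfold incr
  rw [Finset.sum_update_of_mem (Finset.mem_univ i),
    Finset.sum_eq_sum_sdiff_singleton_add (Finset.mem_univ i) J]
  ring

/-- The map `f_{j+1,m} : V_j → V_{j+1}`, `e_J ↦ ∑ᵢ (jᵢ+1)(mᵢ−jᵢ) e_{J+1ᵢ}`. -/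
noncomputable def fMap (n : ℕ) (m : Fin n → ℕ) (j : ℕ) : V n j →ₗ[ℂ] V n (j + 1) :=
  Finsupp.lift (V n (j + 1)) ℂ (MIdx n j) fun J =>
    ∑ i, (((J.1 i : ℂ) + 1) * ((m i : ℂ) - (J.1 i : ℂ))) •
      Finsupp.single (⟨incr J.1 i, by rw [sum_incr, J.2]⟩ : MIdx n (j + 1)) (1 : ℂ)

/-- `d(m,j)`: the number of multiindices `J` with `J i ≤ m i` for all `i` and `|J| = j`. -/
noncomputable def dCount (n : ℕ) (m : Fin n → ℕ) (j : ℤ) : ℕ :=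
  Set.ncard {J : Fin n → ℕ | (∀ i, J i ≤ m i) ∧ ∑ i, (J i : ℤ) = j}

/-- `w(m,j) = d(m,j) − d(m,j−1)`. -/
noncomputable def w (n : ℕ) (m : Fin n → ℕ) (j : ℤ) : ℤ :=
  (dCount n m j : ℤ) - (dCount n m (j - 1) : ℤ)

section RaisingLowering

variable {K : Type*} [Field K] {M : ℕ → Type*} [∀ j, AddCommGroup (M j)] [∀ j, Module K (M j)]
  {F : ∀ j, M j →ₗ[K] M (j + 1)} {E : ∀ j, M (j + 1) →ₗ[K] M j} {h : ℕ → K}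

theorem exists_eq_sum_Icc_of_apply_eq_smul (h₀ : ∀ v, E 0 (F 0 v) = h 0 • v)
    (hsucc : ∀ j v, E (j + 1) (F (j + 1) v) = F j (E j v) + h (j + 1) • v)
    {j : ℕ} {c : K} {v : M j} (hv : v ≠ 0) (hcv : E j (F j v) = c • v) :
    ∃ s ≤ j, c = ∑ t ∈ Finset.Icc s j, h t := by
  induction j generalizing c with
  | zero =>
    refine ⟨0, le_rfl, ?_⟩
    rw [h₀] at hcv
    simpa using (smul_left_injective K hv hcv).symm
  | succ j ih =>
    -- `E v` is an eigenvector of `E j ∘ F j` for the eigenvalue `c - h (j + 1)`, unless it vanishes.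
    have hFE : F j (E j v) = (c - h (j + 1)) • v := by
      rw [sub_smul, ← hcv, hsucc, add_sub_cancel_right]
    by_cases hEv : E j v = 0
    · refine ⟨j + 1, le_rfl, ?_⟩
      rw [hEv, map_zero, eq_comm, smul_eq_zero, sub_eq_zero] at hFE
      simpa using hFE.resolve_right hv
    · obtain ⟨s, hs, hsum⟩ := ih hEv (c := c - h (j + 1)) (by rw [hFE, map_smul])
      refine ⟨s, hs.trans j.le_succ, ?_⟩
      rw [Finset.sum_Icc_succ_top (by omega), ← hsum, sub_add_cancel]

theorem injective_of_sum_Icc_ne_zero (h₀ : ∀ v, E 0 (F 0 v) = h 0 • v)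
    (hsucc : ∀ j v, E (j + 1) (F (j + 1) v) = F j (E j v) + h (j + 1) • v)
    {j : ℕ} (hne : ∀ s ≤ j, ∑ t ∈ Finset.Icc s j, h t ≠ 0) : Function.Injective (F j) := by
  refine (injective_iff_map_eq_zero _).2 fun v hv => ?_
  by_contra hv0
  obtain ⟨s, hs, hsum⟩ := exists_eq_sum_Icc_of_apply_eq_smul h₀ hsucc hv0
    (c := 0) (by rw [hv, map_zero, zero_smul])
  exact hne s hs hsum.symm

end RaisingLowering

theorem sum_sum_eq_sum_sum_add_sum_diag {ι G : Type*} [Fintype ι] [AddCommGroup G]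
    (A B : ι → ι → G) (hAB : ∀ i l, i ≠ l → A i l = B l i) :
    ∑ i, ∑ l, A i l = ∑ i, ∑ l, B i l + ∑ i, (A i i - B i i) := by
  rw [← sub_eq_iff_eq_add', Finset.sum_comm (f := B), ← Finset.sum_sub_distrib]
  refine Finset.sum_congr rfl fun i _ => ?_
  rw [← Finset.sum_sub_distrib, Finset.sum_eq_single i (fun l _ hli => by
    rw [hAB i l hli.symm, sub_self]) (by simp)]

theorem sum_Icc_sub_two_mul {R : Type*} [CommRing R] (a : R) {s j : ℕ} (hs : s ≤ j) :
    ∑ t ∈ Finset.Icc s j, (a - 2 * (t : R)) = ((j : R) - s + 1) * (a - (j + s)) := by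
  induction j, hs using Nat.le_induction with
  | base => rw [Finset.Icc_self, Finset.sum_singleton]; ring
  | succ j hsj ih =>
    rw [Finset.sum_Icc_succ_top (by omega), ih]
    push_cast
    ring

namespace MIdx

variable {n j : ℕ}

noncomputable instance instFintype : Fintype (MIdx n j) :=
  Fintype.ofEquiv _ (Sym.equivNatSumOfFintype (Fin n) j)

def raise (J : MIdx n j) (i : Fin n) : MIdx n (j + 1) :=
  ⟨incr J.1 i, by rw [sum_incr, J.2]⟩

def lower (J : MIdx n (j + 1)) (l : Fin n) (hl : 0 < J.1 l) : MIdx n j :=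
  ⟨Function.update J.1 l (J.1 l - 1), by
    have hJ := J.2
    rw [← Finset.add_sum_erase _ _ (Finset.mem_univ l)] at hJ
    rw [Finset.sum_update_of_mem (Finset.mem_univ l), Finset.sdiff_singleton_eq_erase]
    omega⟩

noncomputable def lowerSingle (J : MIdx n (j + 1)) (l : Fin n) : V n j :=
  if hl : 0 < J.1 l then single (J.lower l hl) 1 else 0

theorem raise_apply_of_ne (J : MIdx n j) {i l : Fin n} (h : i ≠ l) : (J.raise i).1 l = J.1 l :=
  Function.update_of_ne h.symm _ _

theorem lower_apply_of_ne (J : MIdx n (j + 1)) {i l : Fin n} (h : i ≠ l) (hl : 0 < J.1 l) :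
    (J.lower l hl).1 i = J.1 i :=
  Function.update_of_ne h _ _

theorem lower_raise (J : MIdx n j) (i : Fin n) (hi : 0 < (J.raise i).1 i) :
    (J.raise i).lower i hi = J :=
  Subtype.ext <| by simp [lower, raise, incr]

theorem raise_lower (J : MIdx n (j + 1)) (i : Fin n) (hi : 0 < J.1 i) :
    (J.lower i hi).raise i = J :=
  Subtype.ext <| by simp [lower, raise, incr, Nat.sub_add_cancel hi]

theorem lower_raise_comm (J : MIdx n (j + 1)) {i l : Fin n} (h : i ≠ l) (hl : 0 < J.1 l)
    (hl' : 0 < (J.raise i).1 l) : (J.raise i).lower l hl' = (J.lower l hl).raise i :=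
  Subtype.ext <| by
    simp only [lower, raise, incr, Function.update_of_ne h.symm, Function.update_of_ne h]
    exact Function.update_comm h _ _ _

theorem lowerSingle_raise_self (J : MIdx n j) (i : Fin n) :
    (J.raise i).lowerSingle i = single J 1 := by
  rw [lowerSingle, dif_pos (by simp [raise, incr]), lower_raise]

end MIdx

theorem finrank_V (n j : ℕ) : Module.finrank ℂ (V n j) = (n + j - 1).choose j := by
  rw [Module.finrank_finsupp_self, ← Fintype.card_congr (Sym.equivNatSumOfFintype (Fin n) j),
    Sym.card_sym_eq_choose, Fintype.card_fin]

def fCoeff {n : ℕ} (m J : Fin n → ℕ) (i : Fin n) : ℂ := ((J i : ℂ) + 1) * ((m i : ℂ) - (J i : ℂ))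

noncomputable def eMap (n j : ℕ) : V n (j + 1) →ₗ[ℂ] V n j :=
  Finsupp.lift (V n j) ℂ (MIdx n (j + 1)) fun J => ∑ l, J.lowerSingle l

section Commutator

variable {n j : ℕ} (m : Fin n → ℕ)

theorem fMap_single (J : MIdx n j) :
    fMap n m j (single J 1) = ∑ i, fCoeff m J.1 i • single (J.raise i) 1 := by
  simp [fMap, fCoeff, MIdx.raise]

theorem eMap_single (J : MIdx n (j + 1)) : eMap n j (single J 1) = ∑ l, J.lowerSingle l := by
  simp [eMap]

theorem eMap_fMap_single (J : MIdx n j) :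
    eMap n j (fMap n m j (single J 1)) = ∑ i, ∑ l, fCoeff m J.1 i • (J.raise i).lowerSingle l := by
  simp only [fMap_single, map_sum, map_smul, eMap_single, Finset.smul_sum]

theorem fMap_eMap_single (J : MIdx n (j + 1)) :
    fMap n m j (eMap n j (single J 1)) = ∑ l, ∑ i, if hl : 0 < J.1 l then
      fCoeff m (J.lower l hl).1 i • single ((J.lower l hl).raise i) 1 else 0 := by
  simp only [eMap_single, map_sum, MIdx.lowerSingle, apply_dite, fMap_single, map_zero]
  refine Finset.sum_congr rfl fun l _ => ?_
  split_ifs <;> simp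

theorem fCoeff_smul_lowerSingle_raise_of_ne (J : MIdx n (j + 1)) {i l : Fin n} (h : i ≠ l) :
    fCoeff m J.1 i • (J.raise i).lowerSingle l = if hl : 0 < J.1 l then
      fCoeff m (J.lower l hl).1 i • single ((J.lower l hl).raise i) 1 else 0 := by
  have hraise := J.raise_apply_of_ne h
  rw [MIdx.lowerSingle]
  by_cases hl : 0 < J.1 l
  · rw [dif_pos (hraise ▸ hl), dif_pos hl, J.lower_raise_comm h hl, fCoeff, fCoeff,
      J.lower_apply_of_ne h hl]
  · rw [dif_neg (hraise ▸ hl), dif_neg hl, smul_zero]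

theorem fCoeff_smul_lowerSingle_raise_self_sub (J : MIdx n (j + 1)) (i : Fin n) :
    fCoeff m J.1 i • (J.raise i).lowerSingle i - (if hi : 0 < J.1 i then
      fCoeff m (J.lower i hi).1 i • single ((J.lower i hi).raise i) 1 else 0) =
      ((m i : ℂ) - 2 * J.1 i) • single J 1 := by
  rw [MIdx.lowerSingle_raise_self]
  split_ifs with hi
  · have hlower : ((J.lower i hi).1 i : ℂ) = J.1 i - 1 := by
      simp [MIdx.lower, Nat.cast_pred hi]
    rw [J.raise_lower i hi, ← sub_smul, fCoeff, fCoeff, hlower]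
    ring_nf
  · rw [sub_zero, fCoeff, Nat.eq_zero_of_not_pos hi]
    simp

theorem eMap_fMap_single_succ (J : MIdx n (j + 1)) :
    eMap n (j + 1) (fMap n m (j + 1) (single J 1)) =
      fMap n m j (eMap n j (single J 1)) +
        ((∑ i, (m i : ℂ)) - 2 * ((j + 1 : ℕ) : ℂ)) • single J 1 := by
  rw [eMap_fMap_single, fMap_eMap_single, sum_sum_eq_sum_sum_add_sum_diag _ _
    fun i l h => fCoeff_smul_lowerSingle_raise_of_ne m J h]
  simp only [fCoeff_smul_lowerSingle_raise_self_sub, ← Finset.sum_smul, Finset.sum_sub_distrib,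
    ← Finset.mul_sum, ← Nat.cast_sum, J.2]

theorem eMap_fMap_single_zero (J : MIdx n 0) :
    eMap n 0 (fMap n m 0 (single J 1)) = (∑ i, (m i : ℂ)) • single J 1 := by
  have hJ : ∀ i, J.1 i = 0 := fun i => (Finset.sum_eq_zero_iff.mp J.2) i (Finset.mem_univ i)
  rw [eMap_fMap_single, Finset.sum_smul]
  refine Finset.sum_congr rfl fun i _ => ?_
  rw [Finset.sum_eq_single i (fun l _ hli => ?_) (by simp), MIdx.lowerSingle_raise_self, fCoeff, hJ]
  · simp
  · rw [MIdx.lowerSingle, dif_neg (by rw [J.raise_apply_of_ne hli.symm, hJ]; exact lt_irrefl 0),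
      smul_zero]

theorem eMap_fMap_zero (v : V n 0) : eMap n 0 (fMap n m 0 v) = (∑ i, (m i : ℂ)) • v := by
  have : eMap n 0 ∘ₗ fMap n m 0 = (∑ i, (m i : ℂ)) • LinearMap.id := by
    ext J : 2
    simpa using eMap_fMap_single_zero m J
  exact LinearMap.congr_fun this v

theorem eMap_fMap_succ (v : V n (j + 1)) :
    eMap n (j + 1) (fMap n m (j + 1) v) =
      fMap n m j (eMap n j v) + ((∑ i, (m i : ℂ)) - 2 * ((j + 1 : ℕ) : ℂ)) • v := by
  have : eMap n (j + 1) ∘ₗ fMap n m (j + 1) =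
      fMap n m j ∘ₗ eMap n j + ((∑ i, (m i : ℂ)) - 2 * ((j + 1 : ℕ) : ℂ)) • LinearMap.id := by
    ext J : 2
    simpa using eMap_fMap_single_succ m J
  exact LinearMap.congr_fun this v

end Commutator

theorem fMap_injective {n j : ℕ} (m : Fin n → ℕ) (hm : ∑ i, m i ∉ Set.Icc j (2 * j)) :
    Function.Injective (fMap n m j) := by
  refine injective_of_sum_Icc_ne_zero (F := fMap n m) (E := eMap n)
    (h := fun t : ℕ => (∑ i, (m i : ℂ)) - 2 * t) (fun v => by simp [eMap_fMap_zero])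
    (fun _ => eMap_fMap_succ m) fun s hs => ?_
  rw [sum_Icc_sub_two_mul _ hs]
  have hlen : ((j : ℂ) - s + 1) = ((j - s + 1 : ℕ) : ℂ) := by push_cast [Nat.cast_sub hs]; ring
  rw [hlen, ← Nat.cast_sum]
  refine mul_ne_zero (Nat.cast_ne_zero.2 (by omega)) (sub_ne_zero.2 ?_)
  exact_mod_cast fun heq : ∑ i, m i = j + s => hm ⟨by omega, by omega⟩

theorem injective_coker_of_small_weight_general (n k : ℕ) (m : Fin n → ℕ)
    (h : (∑ i, (m i : ℤ)) - k + 1 < 0) :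
    Function.Injective (fMap n m (k - 1)) ∧
    Module.finrank ℂ (V n (k - 1 + 1) ⧸ LinearMap.range (fMap n m (k - 1)))
      = Nat.choose (n + k - 2) k := by
  have hm : ∑ i, m i + 1 < k := by zify; linarith
  obtain ⟨j, rfl⟩ : ∃ j, k = j + 2 := ⟨k - 2, by omega⟩
  show Function.Injective (fMap n m (j + 1)) ∧
    Module.finrank ℂ (V n (j + 1 + 1) ⧸ LinearMap.range (fMap n m (j + 1))) = _
  have hinj : Function.Injective (fMap n m (j + 1)) := fMap_injective m
    fun hmem => absurd hmem.1 (by omega)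
  refine ⟨hinj, ?_⟩
  rw [Submodule.finrank_quotient, LinearMap.finrank_range_of_inj hinj, finrank_V, finrank_V,
    show n + (j + 1 + 1) - 1 = n + j + 1 by omega, Nat.choose_succ_succ',
    show n + (j + 1) - 1 = n + j by omega, show n + (j + 2) - 2 = n + j by omega]
  exact Nat.add_sub_cancel_left _ _

/-- If `|m| − k + 1 < 0`, then `f_{k,m} : V_{k−1} → V_k` is injective and
`dim coker f_{k,m} = C(n+k−2, k)`. -/
theorem injective_coker_of_small_weight (n k : ℕ) (hn : 1 ≤ n) (hk : 1 ≤ k) (m : Fin n → ℕ)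
    (h : (∑ i, (m i : ℤ)) - k + 1 < 0) :
    Function.Injective (fMap n m (k - 1)) ∧
    Module.finrank ℂ (V n (k - 1 + 1) ⧸ LinearMap.range (fMap n m (k - 1)))
      = Nat.choose (n + k - 2) k :=
  injective_coker_of_small_weight_general n k m h
end

section
/- Suppose 0 ≤ m_1 < k. Then every element v of ker f_{k,m} ⊆ V_{k−1} has zero coefficient on every basis vector e_J with j_1 > m_1; i.e., elements of the kernel are supported on multiindices J with j_1 ≤ m_1. -/
open Finsupp

/-! The coefficient of `e_{J + 1₁}` in `f v` is `(j₁ + 1)(m₁ - j₁) v_J` plus coefficients of `v`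
at multiindices `J'` with `j'₁ = j₁ + 1`. Hence, for a kernel element, a nonzero coefficient at `J`
with `j₁ > m₁` forces a nonzero one further up; taking `j₁` maximal among such `J` is absurd. -/

section Incr

variable {n : ℕ}

lemma incr_apply_self (J : Fin n → ℕ) (i : Fin n) : incr J i i = J i + 1 :=
  Function.update_self i _ J

lemma incr_apply_of_ne (J : Fin n → ℕ) {i x : Fin n} (hx : x ≠ i) : incr J i x = J x :=
  Function.update_of_ne hx _ J

lemma incr_left_injective (i : Fin n) : Function.Injective fun J : Fin n → ℕ => incr J i := by
  intro J J' h
  funext x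
  have hx := congrFun h x
  by_cases hxi : x = i
  · subst hxi
    simpa only [incr_apply_self, Nat.add_right_cancel_iff] using hx
  · simpa only [incr_apply_of_ne _ hxi] using hx

lemma apply_eq_add_one_of_incr_eq_incr {J J' : Fin n → ℕ} {i i' : Fin n} (hi : i' ≠ i)
    (h : incr J' i' = incr J i) : J' i = J i + 1 := by
  simpa only [incr_apply_of_ne _ hi.symm, incr_apply_self] using congrFun h i

end Incr

section Kernel

variable {n j : ℕ} (m : Fin n → ℕ)

lemma fMap_apply (v : V n j) (K : MIdx n (j + 1)) :
    fMap n m j v K = v.sum fun J a => a * ∑ i,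
      if incr J.1 i = K.1 then ((J.1 i : ℂ) + 1) * ((m i : ℂ) - J.1 i) else 0 := by
  simp only [fMap, Finsupp.lift_apply, Finsupp.sum_apply, Finsupp.smul_apply, smul_eq_mul,
    Finsupp.finsetSum_apply, Finsupp.single_apply, Subtype.ext_iff, mul_ite, mul_one, mul_zero]

lemma fMap_apply_incr_of_forall_lt {v : V n j} (J : MIdx n j) (i : Fin n)
    (hv : ∀ J' : MIdx n j, J.1 i < J'.1 i → v J' = 0) :
    fMap n m j v ⟨incr J.1 i, by rw [sum_incr, J.2]⟩ =
      v J * (((J.1 i : ℂ) + 1) * ((m i : ℂ) - J.1 i)) := by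
  rw [fMap_apply, Finsupp.sum_eq_single J]
  · rw [Finset.sum_eq_single i]
    · rw [if_pos rfl]
    · intro i' _ hi'
      exact if_neg fun h => by simpa using apply_eq_add_one_of_incr_eq_incr hi' h
    · simp
  · intro J' hJ' hne
    refine mul_eq_zero_of_right _ (Finset.sum_eq_zero fun i' _ => if_neg fun h => ?_)
    by_cases hi' : i' = i
    · subst hi'
      exact hne (Subtype.ext (incr_left_injective i' h))
    · exact hJ' (hv J' (by rw [apply_eq_add_one_of_incr_eq_incr hi' h]; omega))
  · simp

lemma apply_eq_zero_of_mem_ker_fMap {v : V n j} (hv : v ∈ LinearMap.ker (fMap n m j))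
    (J : MIdx n j) (i : Fin n) (hJ : J.1 i ≠ m i)
    (hlt : ∀ J' : MIdx n j, J.1 i < J'.1 i → v J' = 0) : v J = 0 := by
  have h := fMap_apply_incr_of_forall_lt m J i hlt
  rw [LinearMap.mem_ker.mp hv] at h
  refine (mul_eq_zero.mp h.symm).resolve_right (mul_ne_zero ?_ ?_)
  · exact Nat.cast_add_one_ne_zero _
  · exact sub_ne_zero.mpr (by exact_mod_cast hJ.symm)

end Kernel

theorem kernel_support_bounded_general (n k : ℕ) (m : Fin (n + 1) → ℕ)
    (v : V (n + 1) (k - 1)) (hv : v ∈ LinearMap.ker (fMap (n + 1) m (k - 1)))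
    (J : MIdx (n + 1) (k - 1)) (hJ : m 0 < J.1 0) :
    v J = 0 := by
  by_contra hvJ
  obtain ⟨J₀, hJ₀, hmax⟩ := (v.support.filter fun J' => m 0 < J'.1 0).exists_max_image
    (fun J' => J'.1 0) ⟨J, by simp [hJ, hvJ]⟩
  simp only [Finset.mem_filter, Finsupp.mem_support_iff] at hJ₀ hmax
  refine hJ₀.1 (apply_eq_zero_of_mem_ker_fMap m hv J₀ 0 hJ₀.2.ne' fun J' hlt => ?_)
  by_contra hJ'
  exact (hmax J' ⟨hJ', hJ₀.2.trans hlt⟩).not_gt hlt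

/-- If `0 ≤ m_1 < k`, then every element of `ker f_{k,m} ⊆ V_{k−1}` has zero coefficient
on every basis vector `e_J` with `j_1 > m_1`. -/
theorem kernel_support_bounded (n k : ℕ) (hk : 1 ≤ k)
    (m : Fin (n + 1) → ℕ) (hm : m 0 < k)
    (v : V (n + 1) (k - 1)) (hv : v ∈ LinearMap.ker (fMap (n + 1) m (k - 1)))
    (J : MIdx (n + 1) (k - 1)) (hJ : m 0 < J.1 0) :
    v J = 0 :=
  kernel_support_bounded_general n k m v hv J hJ
end
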